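/- arXiv:1812.00485 — 4 statements merged into one kernel-verified Lean document; each statement's English description precedes it below -/
import Mathlib

section
/- Let n be prime and let i, s be integers with 1 ≤ i ≤ n−1. Suppose b : ℤ_n → 𝔽₂ satisfies b(s) = b(2s) + b(2s − i) for all s ∈ ℤ_n. Then for every t with 1 ≤ t ≤ n−1 and every s ∈ ℤ_n, b(s) = Σ_{ℓ=0}^{2^t − 1} b(2^t·s − ℓ·i). -/
/-! Each application of `b s = b (2s) + b (2s - i)` to a term `b (2^t s - ℓ i)` replaces it by
`b (2^(t+1) s - 2ℓ i) + b (2^(t+1) s - (2ℓ+1) i)`, so the summation indices `0, …, 2^t - 1` double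
into `0, …, 2^(t+1) - 1`. -/

open Finset

theorem sum_range_two_mul {M : Type*} [AddCommMonoid M] (m : ℕ) (f : ℕ → M) :
    ∑ k ∈ range (2 * m), f k = ∑ k ∈ range m, (f (2 * k) + f (2 * k + 1)) := by
  induction m with
  | zero => simp
  | succ m ih =>
    rw [Nat.mul_succ, sum_range_succ, sum_range_succ, sum_range_succ, ih, add_assoc]

theorem eq_sum_range_pow_two_of_eq_add {R M : Type*} [CommRing R] [AddCommMonoid M]
    (b : R → M) (c : R) (hrec : ∀ s, b s = b (2 * s) + b (2 * s - c)) (t : ℕ) (s : R) :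
    b s = ∑ ℓ ∈ range (2 ^ t), b (2 ^ t * s - ℓ * c) := by
  induction t with
  | zero => simp
  | succ t ih =>
    rw [ih, pow_succ', sum_range_two_mul]
    refine sum_congr rfl fun ℓ _ => ?_
    rw [hrec]
    push_cast
    ring_nf

theorem stmt_10_general (n i : ℕ)
    (b : ZMod n → ZMod 2)
    (hrec : ∀ s : ZMod n, b s = b (2 * s) + b (2 * s - (i : ZMod n))) :
    ∀ t : ℕ, 1 ≤ t → t ≤ n - 1 → ∀ s : ZMod n,
      b s = ∑ ℓ ∈ Finset.range (2 ^ t), b ((2 : ZMod n) ^ t * s - (ℓ : ZMod n) * (i : ZMod n)) :=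
  fun t _ _ s => eq_sum_range_pow_two_of_eq_add b (i : ZMod n) hrec t s

theorem stmt_10 (n i : ℕ) (hn : n.Prime) (hi1 : 1 ≤ i) (hi2 : i ≤ n - 1)
    (b : ZMod n → ZMod 2)
    (hrec : ∀ s : ZMod n, b s = b (2 * s) + b (2 * s - (i : ZMod n))) :
    ∀ t : ℕ, 1 ≤ t → t ≤ n - 1 → ∀ s : ZMod n,
      b s = ∑ ℓ ∈ Finset.range (2 ^ t), b ((2 : ZMod n) ^ t * s - (ℓ : ZMod n) * (i : ZMod n)) :=
  stmt_10_general n i b hrec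
end

section
/- Let n ≥ 5 be a prime such that 2 is a primitive root modulo n. For t ∈ {0,…,(n−1)/2}, define I_t = |{(τ,ℓ) : 0 ≤ τ < t, 1 ≤ ℓ ≤ 2^τ, 2^τ − ℓ ≡ 2^{−1} (mod n)}| and x_t = 1 if (2^{t−1} mod n) ≥ (2^{−1} mod n) and x_t = 0 otherwise. Then for every t ∈ {0,…,(n−1)/2}, I_t + x_t is even. -/
open Finset

private def rowS (n t : ℕ) : Finset ℕ :=
  (Finset.Icc 1 (2^t)).filter (fun l => (2:ZMod n)^t - (l:ZMod n) = (2:ZMod n)⁻¹)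

private def Aset (n t : ℕ) : Finset (ℕ × ℕ) :=
  (Finset.range t).biUnion (fun τ => (rowS n τ).image (fun l => (τ, l)))

private lemma mem_Aset {n t : ℕ} {p : ℕ × ℕ} :
    p ∈ Aset n t ↔ p.1 < t ∧ 1 ≤ p.2 ∧ p.2 ≤ 2 ^ p.1 ∧
      (2 : ZMod n) ^ p.1 - (p.2 : ZMod n) = (2 : ZMod n)⁻¹ := by
  simp only [Aset, rowS, Finset.mem_biUnion, Finset.mem_image, Finset.mem_filter,
    Finset.mem_range, Finset.mem_Icc]
  constructor
  · rintro ⟨τ, hτ, l, ⟨⟨h1, h2⟩, h3⟩, rfl⟩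
    exact ⟨hτ, h1, h2, h3⟩
  · rintro ⟨h0, h1, h2, h3⟩
    exact ⟨p.1, h0, p.2, ⟨⟨h1, h2⟩, h3⟩, rfl⟩

private lemma card_Aset_succ (n t : ℕ) :
    (Aset n (t+1)).card = (Aset n t).card + (rowS n t).card := by
  have h : Aset n (t+1) = (rowS n t).image (fun l => (t, l)) ∪ Aset n t := by
    rw [Aset, Finset.range_add_one, Finset.biUnion_insert]; rfl
  rw [h, Finset.card_union_of_disjoint, Finset.card_image_of_injective,
    Nat.add_comm]
  · intro a b hab; exact (Prod.mk.injEq _ _ _ _ ▸ hab).2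
  · rw [Finset.disjoint_left]
    rintro ⟨a, b⟩ hmem hA
    simp only [Finset.mem_image] at hmem
    obtain ⟨l, _, hl⟩ := hmem
    have := mem_Aset.1 hA
    have ha : a = t := (Prod.mk.injEq _ _ _ _ ▸ hl).1.symm
    omega

private lemma natCard_eq (n t : ℕ) :
    Nat.card {p : ℕ × ℕ // p.1 < t ∧ 1 ≤ p.2 ∧ p.2 ≤ 2 ^ p.1 ∧
      (2 : ZMod n) ^ p.1 - (p.2 : ZMod n) = (2 : ZMod n)⁻¹} = (Aset n t).card := by
  have hset : {p : ℕ × ℕ | p.1 < t ∧ 1 ≤ p.2 ∧ p.2 ≤ 2 ^ p.1 ∧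
      (2 : ZMod n) ^ p.1 - (p.2 : ZMod n) = (2 : ZMod n)⁻¹} = ↑(Aset n t) := by
    ext p; simp [mem_Aset]
  calc Nat.card {p : ℕ × ℕ // p.1 < t ∧ 1 ≤ p.2 ∧ p.2 ≤ 2 ^ p.1 ∧
      (2 : ZMod n) ^ p.1 - (p.2 : ZMod n) = (2 : ZMod n)⁻¹}
      = ({p : ℕ × ℕ | p.1 < t ∧ 1 ≤ p.2 ∧ p.2 ≤ 2 ^ p.1 ∧
      (2 : ZMod n) ^ p.1 - (p.2 : ZMod n) = (2 : ZMod n)⁻¹} : Set (ℕ × ℕ)).ncard :=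
        Nat.card_coe_set_eq _
    _ = (↑(Aset n t) : Set (ℕ × ℕ)).ncard := by rw [hset]
    _ = (Aset n t).card := Set.ncard_coe_finset _

private lemma div_two_n {n : ℕ} (hn : 0 < n) (u : ℕ) (h : u < 2*n) :
    u / n = if n ≤ u then 1 else 0 := by
  split
  · exact Nat.div_eq_of_lt_le (by omega) (by omega)
  · exact Nat.div_eq_of_lt (by omega)

private lemma count_mod {n : ℕ} (hn : 0 < n) (r : ℕ) (hr : r < n) (M : ℕ) :
    ((Finset.range M).filter (fun m => m % n = r)).card = (M + (n - 1 - r)) / n := by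
  induction M with
  | zero => simpa using (Nat.div_eq_of_lt (by omega : n - 1 - r < n)).symm
  | succ M ih =>
    rw [Finset.range_add_one, Finset.filter_insert]
    obtain ⟨s, hs, hMs⟩ : ∃ s, s < n ∧ M % n = s := ⟨M % n, Nat.mod_lt _ hn, rfl⟩
    have hq : n * (M / n) + s = M := by rw [← hMs]; exact Nat.div_add_mod M n
    set q := M / n with hqdef
    have e1 : M + 1 + (n - 1 - r) = n * q + (s + 1 + (n - 1 - r)) := by omega
    have e2 : M + (n - 1 - r) = n * q + (s + (n - 1 - r)) := by omega
    have d1 : (s + 1 + (n - 1 - r)) / n = if n ≤ s + 1 + (n - 1 - r) then 1 else 0 :=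
      div_two_n hn _ (by omega)
    have d2 : (s + (n - 1 - r)) / n = if n ≤ s + (n - 1 - r) then 1 else 0 :=
      div_two_n hn _ (by omega)
    split
    · next h =>
      rw [Finset.card_insert_of_notMem (by simp), ih, e1, e2,
        Nat.mul_add_div hn, Nat.mul_add_div hn, d1, d2]
      have hsr : s = r := by omega
      split_ifs <;> omega
    · next h =>
      rw [ih, e1, e2, Nat.mul_add_div hn, Nat.mul_add_div hn, d1, d2]
      have hsr : s ≠ r := by omega
      split_ifs <;> omega

private lemma inv_two_eq {n : ℕ} (hn : n.Prime) (hn5 : 5 ≤ n) :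
    (2 : ZMod n)⁻¹ = (((n+1)/2 : ℕ) : ZMod n) := by
  haveI : Fact n.Prime := ⟨hn⟩
  have hodd : n % 2 = 1 := by rcases hn.eq_two_or_odd with h | h <;> omega
  apply inv_eq_of_mul_eq_one_right
  have : ((2 * ((n+1)/2) : ℕ) : ZMod n) = ((n + 1 : ℕ) : ZMod n) := by
    congr 1; omega
  push_cast at this ⊢
  rw [this]
  simp [ZMod.natCast_self]

private lemma rowS_card {n : ℕ} (hn : n.Prime) (hn5 : 5 ≤ n) (t : ℕ) :
    (rowS n t).card = (2^t + (n - 1 - (n+1)/2)) / n := by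
  have hn0 : 0 < n := by omega
  have hc : (n+1)/2 < n := by omega
  rw [← count_mod hn0 _ hc (2^t)]
  apply Finset.card_bij (fun l _ => 2^t - l)
  · intro l hl
    simp only [rowS, Finset.mem_filter, Finset.mem_Icc] at hl
    obtain ⟨⟨h1, h2⟩, h3⟩ := hl
    simp only [Finset.mem_filter, Finset.mem_range]
    refine ⟨by omega, ?_⟩
    have hcast : ((2^t - l : ℕ) : ZMod n) = (2 : ZMod n)^t - (l : ZMod n) := by
      push_cast [Nat.cast_sub h2]; ring
    have : ((2^t - l : ℕ) : ZMod n) = (((n+1)/2 : ℕ) : ZMod n) := by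
      rw [hcast, h3, inv_two_eq hn hn5]
    have hmod : (2^t - l) % n = ((n+1)/2) % n := (ZMod.natCast_eq_natCast_iff _ _ _).1 this
    rw [Nat.mod_eq_of_lt hc] at hmod
    exact hmod
  · intro a ha b hb hab
    simp only [rowS, Finset.mem_filter, Finset.mem_Icc] at ha hb
    omega
  · intro m hm
    simp only [Finset.mem_filter, Finset.mem_range] at hm
    obtain ⟨hm1, hm2⟩ := hm
    refine ⟨2^t - m, ?_, by omega⟩
    simp only [rowS, Finset.mem_filter, Finset.mem_Icc]
    refine ⟨⟨by omega, by omega⟩, ?_⟩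
    have hcast : ((m : ℕ) : ZMod n) = (2 : ZMod n)^t - ((2^t - m : ℕ) : ZMod n) := by
      push_cast [Nat.cast_sub (by omega : 2^t - m ≤ 2^t), Nat.cast_sub (le_of_lt hm1)]
      ring
    rw [← hcast]
    rw [inv_two_eq hn hn5]
    have : (m : ℕ) ≡ (n+1)/2 [MOD n] := by
      show m % n = ((n+1)/2) % n
      rw [Nat.mod_eq_of_lt hc]; exact hm2
    exact (ZMod.natCast_eq_natCast_iff _ _ _).2 this

private lemma pow_mod_ne {n : ℕ} (hn : n.Prime) (hn5 : 5 ≤ n)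
    (hprim : orderOf (2 : ZMod n) = n - 1) {t : ℕ} (ht : t + 1 ≤ (n-1)/2) :
    2^t % n ≠ (n+1)/2 := by
  intro h
  have h1 : ((2^t % n : ℕ) : ZMod n) = (((n+1)/2 : ℕ) : ZMod n) := by rw [h]
  rw [ZMod.natCast_mod] at h1
  have h2 : (2 : ZMod n)^t = (2 : ZMod n)⁻¹ := by
    rw [inv_two_eq hn hn5, ← h1]; push_cast; ring
  have h3 : (2 : ZMod n)^(t+1) = 1 := by
    rw [pow_succ, h2]
    haveI : Fact n.Prime := ⟨hn⟩
    haveI : NeZero n := ⟨by omega⟩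
    have h2ne : (2 : ZMod n) ≠ 0 := by
      intro h0
      have h0' : ((2 : ℕ) : ZMod n) = 0 := by push_cast; exact h0
      have := (ZMod.natCast_eq_zero_iff 2 n).1 h0'
      have := Nat.le_of_dvd (by omega) this
      omega
    exact inv_mul_cancel₀ h2ne
  have h4 := orderOf_dvd_of_pow_eq_one h3
  rw [hprim] at h4
  have := Nat.le_of_dvd (by omega) h4
  omega

private lemma rowS_card_eq {n : ℕ} (hn : n.Prime) (hn5 : 5 ≤ n)
    (hprim : orderOf (2 : ZMod n) = n - 1) {t : ℕ} (ht : t + 1 ≤ (n-1)/2) :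
    (rowS n t).card = 2^t / n + (if (n+1)/2 ≤ 2^t % n then 1 else 0) := by
  have hn0 : 0 < n := by omega
  have hodd : n % 2 = 1 := by rcases hn.eq_two_or_odd with h | h <;> omega
  have hne := pow_mod_ne hn hn5 hprim ht
  rw [rowS_card hn hn5]
  obtain ⟨a, ha, hMa⟩ : ∃ a, a < n ∧ 2^t % n = a := ⟨2^t % n, Nat.mod_lt _ hn0, rfl⟩
  have hq : n * (2^t / n) + a = 2^t := by rw [← hMa]; exact Nat.div_add_mod _ n
  set q := 2^t / n with hqdef
  have e1 : 2^t + (n - 1 - (n+1)/2) = n * q + (a + (n - 1 - (n+1)/2)) := by omega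
  rw [e1, Nat.mul_add_div hn0, div_two_n hn0 _ (by omega)]
  split_ifs <;> omega

private lemma pow_div_parity {n : ℕ} (hn : n.Prime) (hn5 : 5 ≤ n) (t : ℕ) :
    (2^t / n) % 2 = (if (n+1)/2 ≤ 2^(t-1) % n then 1 else 0) % 2 := by
  have hn0 : 0 < n := by omega
  have hodd : n % 2 = 1 := by rcases hn.eq_two_or_odd with h | h <;> omega
  cases t with
  | zero =>
    have h0 : (1 : ℕ) / n = 0 := Nat.div_eq_of_lt (by omega)
    have h1 : (1 : ℕ) % n = 1 := Nat.mod_eq_of_lt (by omega)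
    simp only [pow_zero, Nat.zero_sub, h0, h1]
    rw [if_neg (by omega)]
  | succ s =>
    obtain ⟨a, ha, hMa⟩ : ∃ a, a < n ∧ 2^s % n = a := ⟨2^s % n, Nat.mod_lt _ hn0, rfl⟩
    have hq : n * (2^s / n) + a = 2^s := by rw [← hMa]; exact Nat.div_add_mod _ n
    set q := 2^s / n with hqdef
    have hnq : n * (2 * q) = 2 * (n * q) := by ring
    have e1 : 2^(s+1) = n * (2 * q) + 2 * a := by rw [pow_succ]; omega
    have e2 : 2^(s+1) / n = 2 * q + (2 * a) / n := by
      rw [e1, Nat.mul_add_div hn0]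
    rw [e2, div_two_n hn0 _ (by omega)]
    have : s + 1 - 1 = s := by omega
    rw [this, hMa]
    split_ifs <;> omega

theorem stmt_11 (n : ℕ) (hn : n.Prime) (hn5 : 5 ≤ n)
    (hprim : orderOf (2 : ZMod n) = n - 1) :
    ∀ t : ℕ, t ≤ (n - 1) / 2 →
      Even (Nat.card {p : ℕ × ℕ // p.1 < t ∧ 1 ≤ p.2 ∧ p.2 ≤ 2 ^ p.1 ∧
          (2 : ZMod n) ^ p.1 - (p.2 : ZMod n) = (2 : ZMod n)⁻¹} +
        (if (n + 1) / 2 ≤ 2 ^ (t - 1) % n then 1 else 0)) := by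
  intro t
  induction t with
  | zero =>
    intro _
    rw [natCard_eq]
    have hA : (Aset n 0).card = 0 := by simp [Aset]
    have h1 : (1 : ℕ) % n = 1 := Nat.mod_eq_of_lt (by omega)
    simp only [hA, Nat.zero_sub, pow_zero, h1]
    rw [if_neg (by omega)]
    exact ⟨0, rfl⟩
  | succ s ih =>
    intro hs
    have ihs := ih (by omega)
    rw [natCard_eq] at ihs ⊢
    rw [card_Aset_succ, rowS_card_eq hn hn5 hprim hs]
    have hp := pow_div_parity hn hn5 s
    have hx : s + 1 - 1 = s := by omega
    rw [hx]
    rw [Nat.even_iff] at ihs ⊢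
    omega
end

section
/- Let n ≥ 5 be a prime with 2 a primitive root mod n, and let I = |{(τ,ℓ) : 0 ≤ τ < (n−1)/2, 1 ≤ ℓ ≤ 2^τ, 2^τ − ℓ ≡ 2^{−1} (mod n)}|. Then I is even. -/
/-!
Write `n = 2m + 1`. Since `2⁻¹ ≡ m + 1`, the substitution `j = 2^τ - ℓ` turns the pairs with a
given `τ` into the `j < 2^τ` with `j ≡ m + 1 (mod n)`; there are `⌊2^τ/n⌋ + [m + 1 < 2^τ mod n]`
of them. As `n` is odd, this count is congruent mod 2 to `|2^τ|_n + 2^τ`, where `|x|_n` is the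
absolute value of the least absolute residue of `x` (the residue `m + 1 = 2^(n-2)` does not occur
for `τ < m`). Because `2` is a primitive root, `2^m ≡ -1`, so `τ ↦ |2^τ|_n` maps `[0, m)`
bijectively onto `[1, m]`, giving `I ≡ m(m+1)/2 + 1 (mod 2)`. Finally `2` is a non-residue, so
`n ≡ ±3 (mod 8)`, i.e. `m ≡ 1, 2 (mod 4)`, and `m(m+1)/2` is odd.
-/

open Finset

namespace ZMod

variable {p : ℕ} [Fact p.Prime] {g : ZMod p}

lemma ne_zero_of_orderOf_eq_sub_one (hg : orderOf g = p - 1) : g ≠ 0 := by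
  have := (Fact.out : p.Prime).two_le
  rintro rfl
  rw [orderOf_zero] at hg
  omega

lemma pow_div_two_eq_neg_one_of_orderOf_eq (hp : p ≠ 2) (hg : orderOf g = p - 1) :
    g ^ (p / 2) = -1 := by
  have := (Fact.out : p.Prime).two_le
  exact (pow_div_two_eq_neg_one_or_one p (ne_zero_of_orderOf_eq_sub_one hg)).resolve_left
    (pow_ne_one_of_lt_orderOf (by omega) (by omega))

lemma not_isSquare_of_orderOf_eq (hp : p ≠ 2) (hg : orderOf g = p - 1) : ¬IsSquare g := by
  have : Fact (2 < p) := ⟨by have := (Fact.out : p.Prime).two_le; omega⟩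
  rw [euler_criterion p (ne_zero_of_orderOf_eq_sub_one hg),
    pow_div_two_eq_neg_one_of_orderOf_eq hp hg]
  exact neg_one_ne_one

lemma injOn_natAbs_valMinAbs_pow (hp : p ≠ 2) (hg : orderOf g = p - 1) :
    Set.InjOn (fun τ => (g ^ τ).valMinAbs.natAbs) (range (p / 2)) := by
  have := (Fact.out : p.Prime).eq_two_or_odd
  have hlt : ∀ {k}, k < p / 2 + p / 2 → k < orderOf g := by intro k hk; rw [hg]; omega
  intro τ hτ σ hσ h
  simp only [coe_range, Set.mem_Iio] at hτ hσ
  rcases natAbs_valMinAbs_eq_natAbs_valMinAbs.1 h with h | h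
  · exact pow_injOn_Iio_orderOf (hlt (by omega)) (hlt (by omega)) h
  · rw [← neg_one_mul, ← pow_div_two_eq_neg_one_of_orderOf_eq hp hg, ← pow_add] at h
    have := pow_injOn_Iio_orderOf (hlt (by omega)) (hlt (by omega)) h
    omega

lemma image_natAbs_valMinAbs_pow (hp : p ≠ 2) (hg : orderOf g = p - 1) :
    (range (p / 2)).image (fun τ => (g ^ τ).valMinAbs.natAbs) = Icc 1 (p / 2) := by
  refine eq_of_subset_of_card_le (fun a ha => ?_) ?_
  · obtain ⟨τ, -, rfl⟩ := mem_image.1 ha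
    rw [mem_Icc, Nat.one_le_iff_ne_zero, Ne, Int.natAbs_eq_zero, valMinAbs_eq_zero]
    exact ⟨pow_ne_zero τ (ne_zero_of_orderOf_eq_sub_one hg), natAbs_valMinAbs_le _⟩
  · rw [card_image_of_injOn (injOn_natAbs_valMinAbs_pow hp hg), card_range, Nat.card_Icc,
      Nat.add_sub_cancel]

lemma sum_range_natAbs_valMinAbs_pow {M : Type*} [AddCommMonoid M] (hp : p ≠ 2)
    (hg : orderOf g = p - 1) (f : ℕ → M) :
    ∑ τ ∈ range (p / 2), f (g ^ τ).valMinAbs.natAbs = ∑ a ∈ Icc 1 (p / 2), f a := by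
  rw [← image_natAbs_valMinAbs_pow hp hg, sum_image (injOn_natAbs_valMinAbs_pow hp hg)]

lemma natAbs_valMinAbs_natCast (n M : ℕ) [NeZero n] :
    (M : ZMod n).valMinAbs.natAbs = if M % n ≤ n / 2 then M % n else n - M % n := by
  have := Nat.mod_lt M (Nat.pos_of_neZero n)
  rw [valMinAbs_def_pos, val_natCast]
  split_ifs <;> omega

lemma inv_two_eq (m : ℕ) : (2 : ZMod (2 * m + 1))⁻¹ = (m + 1 : ℕ) := by
  refine ZMod.inv_eq_of_mul_eq_one _ _ _ ?_
  have : ((2 * m + 1 + 1 : ℕ) : ZMod (2 * m + 1)) = 1 := by simp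
  rw [← this]
  push_cast
  ring

end ZMod

lemma card_filter_Icc_natCast_sub_eq (n M r : ℕ) (hr : r < n) :
    #{ℓ ∈ Icc 1 M | (M : ZMod n) - (ℓ : ℕ) = r} = M / n + if r < M % n then 1 else 0 := by
  have hcount := Nat.count_modEq_card M (by omega : 0 < n) r
  rw [Nat.mod_eq_of_lt hr] at hcount
  rw [← hcount, Nat.count_eq_card_filter_range]
  refine card_nbij' (fun ℓ => M - ℓ) (fun j => M - j) ?_ ?_ ?_ ?_
  all_goals
    intro x hx
    simp only [coe_filter, mem_Icc, mem_range, Set.mem_ofPred_eq] at hx ⊢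
  · refine ⟨by omega, (ZMod.natCast_eq_natCast_iff _ _ _).1 ?_⟩
    rw [Nat.cast_sub hx.1.2, hx.2]
  · refine ⟨by omega, ?_⟩
    rw [← Nat.cast_sub (by omega), Nat.sub_sub_self (by omega)]
    exact (ZMod.natCast_eq_natCast_iff _ _ _).2 hx.2
  · omega
  · omega

lemma div_add_ite_add_modEq (m M : ℕ) (hM : M % (2 * m + 1) ≠ m + 1) :
    M / (2 * m + 1) + (if m + 1 < M % (2 * m + 1) then 1 else 0) + M ≡
      (if M % (2 * m + 1) ≤ m then M % (2 * m + 1) else 2 * m + 1 - M % (2 * m + 1)) [MOD 2] := by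
  have hM' := Nat.div_add_mod M (2 * m + 1)
  have := Nat.mod_lt M (show 0 < 2 * m + 1 by omega)
  generalize M / (2 * m + 1) = q, M % (2 * m + 1) = s at *
  -- `(2m + 1) q ≡ q (mod 2)`; abstracting `m * q` leaves a linear problem
  rw [add_mul, mul_assoc] at hM'
  generalize m * q = t at hM'
  unfold Nat.ModEq
  split_ifs <;> omega

lemma natCard_subtype_eq_sum_card (m : ℕ) (f : ℕ → ℕ) (P : ℕ → ℕ → Prop)
    [∀ τ, DecidablePred (P τ)] :
    Nat.card {x : ℕ × ℕ // x.1 < m ∧ 1 ≤ x.2 ∧ x.2 ≤ f x.1 ∧ P x.1 x.2} =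
      ∑ τ ∈ range m, #{ℓ ∈ Icc 1 (f τ) | P τ ℓ} := by
  rw [← card_sigma, ← Nat.card_eq_finsetCard]
  refine Nat.card_congr (Equiv.subtypeEquiv (Equiv.sigmaEquivProd ℕ ℕ).symm fun x => ?_)
  simp [and_assoc]

lemma sum_Icc_one_id_mul_two (m : ℕ) : (∑ a ∈ Icc 1 m, a) * 2 = m * (m + 1) := by
  induction m with
  | zero => simp
  | succ k ih => rw [sum_Icc_succ_top (by omega), add_mul, ih]; ring

lemma odd_sum_Icc_one_id {m : ℕ} (hm : m % 4 = 1 ∨ m % 4 = 2) : Odd (∑ a ∈ Icc 1 m, a) := by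
  have h := sum_Icc_one_id_mul_two m
  have h4 : m * (m + 1) % 4 = 2 := by
    rw [Nat.mul_mod, Nat.add_mod]
    rcases hm with hm | hm <;> rw [hm]
  rw [Nat.odd_iff]
  omega

lemma natCast_card_filter_two_pow_sub_eq_inv_two {m : ℕ} [Fact (2 * m + 1).Prime]
    (h2 : orderOf (2 : ZMod (2 * m + 1)) = 2 * m) {τ : ℕ} (hτ : τ < m) :
    ((#{ℓ ∈ Icc 1 (2 ^ τ) | (2 : ZMod (2 * m + 1)) ^ τ - (ℓ : ℕ) = 2⁻¹} : ℕ) : ZMod 2) =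
      (((2 : ZMod (2 * m + 1)) ^ τ).valMinAbs.natAbs : ZMod 2) + 2 ^ τ := by
  have hres : 2 ^ τ % (2 * m + 1) ≠ m + 1 := by
    intro h
    have h' : (2 : ZMod (2 * m + 1)) ^ τ = 2⁻¹ := by
      rw [ZMod.inv_two_eq, ← h, ZMod.natCast_mod, Nat.cast_pow, Nat.cast_ofNat]
    refine pow_ne_one_of_lt_orderOf (x := (2 : ZMod (2 * m + 1))) (n := τ + 1) (by omega)
      (by omega) ?_
    rw [pow_succ, h', inv_mul_cancel₀ (ZMod.ne_zero_of_orderOf_eq_sub_one (by omega))]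
  have hcast : (2 : ZMod (2 * m + 1)) ^ τ = ((2 ^ τ : ℕ) : ZMod (2 * m + 1)) := by push_cast; rfl
  have hcount := card_filter_Icc_natCast_sub_eq (2 * m + 1) (2 ^ τ) (m + 1) (by omega)
  have hparity := (ZMod.natCast_eq_natCast_iff _ _ 2).2 (div_add_ite_add_modEq m (2 ^ τ) hres)
  rw [ZMod.inv_two_eq, hcast, hcount, ZMod.natAbs_valMinAbs_natCast,
    show (2 * m + 1) / 2 = m by omega]
  push_cast at hparity ⊢
  rw [← hparity, add_assoc, CharTwo.add_self_eq_zero, add_zero]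

theorem stmt_12_general (n : ℕ) (hn : n.Prime)
    (hprim : orderOf (2 : ZMod n) = n - 1) :
    Even (Nat.card {p : ℕ × ℕ // p.1 < (n - 1) / 2 ∧ 1 ≤ p.2 ∧ p.2 ≤ 2 ^ p.1 ∧
        (2 : ZMod n) ^ p.1 - (p.2 : ZMod n) = (2 : ZMod n)⁻¹}) := by
  have : Fact n.Prime := ⟨hn⟩
  have hn2 : n ≠ 2 := by
    rintro rfl
    exact absurd (orderOf_eq_one_iff.1 hprim) (by decide)
  obtain ⟨m, rfl⟩ := hn.odd_of_ne_two hn2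
  have hm : (2 * m + 1) / 2 = m := by omega
  have hm4 : m % 4 = 1 ∨ m % 4 = 2 := by
    have := (ZMod.exists_sq_eq_two_iff hn2).not.1 (ZMod.not_isSquare_of_orderOf_eq hn2 hprim)
    omega
  rw [show (2 * m + 1 - 1) / 2 = m by omega,
    natCard_subtype_eq_sum_card m (2 ^ ·) fun τ ℓ => (2 : ZMod (2 * m + 1)) ^ τ - ℓ = 2⁻¹,
    ← ZMod.natCast_eq_zero_iff_even, Nat.cast_sum]
  calc ∑ τ ∈ range m,
        ((#{ℓ ∈ Icc 1 (2 ^ τ) | (2 : ZMod (2 * m + 1)) ^ τ - (ℓ : ℕ) = 2⁻¹} : ℕ) : ZMod 2)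
      = ∑ τ ∈ range m, ((((2 : ZMod (2 * m + 1)) ^ τ).valMinAbs.natAbs : ZMod 2) + 2 ^ τ) :=
        sum_congr rfl fun τ hτ =>
          natCast_card_filter_two_pow_sub_eq_inv_two (by omega) (mem_range.1 hτ)
    _ = ∑ a ∈ Icc 1 m, (a : ZMod 2) + ∑ τ ∈ range m, 2 ^ τ := by
        have hgauss := ZMod.sum_range_natAbs_valMinAbs_pow hn2 hprim (Nat.cast : ℕ → ZMod 2)
        rw [hm] at hgauss
        rw [sum_add_distrib, hgauss]
    _ = 0 := by
        rw [← Nat.cast_sum, (odd_sum_Icc_one_id hm4).natCast_zmod_two,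
          show (2 : ZMod 2) = 0 from rfl]
        simp [zero_pow_eq, show 0 < m by omega]
        rfl

theorem stmt_12 (n : ℕ) (hn : n.Prime) (hn5 : 5 ≤ n)
    (hprim : orderOf (2 : ZMod n) = n - 1) :
    Even (Nat.card {p : ℕ × ℕ // p.1 < (n - 1) / 2 ∧ 1 ≤ p.2 ∧ p.2 ≤ 2 ^ p.1 ∧
        (2 : ZMod n) ^ p.1 - (p.2 : ZMod n) = (2 : ZMod n)⁻¹}) :=
  stmt_12_general n hn hprim
end

section
/- Let n be an odd prime and i, j distinct nonzero elements of ℤ_n. Define H = {i, j, 2i, 2j, 2i+j, 2j+i} ⊆ ℤ_n and for ℓ ∈ ℤ_n let B_ℓ be the multiset of six pairs {(0,ℓ), (i, ℓ−2i), (j, ℓ−2j), (0, 2⁻¹ℓ), (i, 2⁻¹(ℓ−i)), (j, 2⁻¹(ℓ−j))} regarded as unordered pairs. Then for ℓ ∉ {0, 3i, 3j} ∪ H, the six unordered pairs in B_ℓ are pairwise distinct, i.e. |B_ℓ| = 6. -/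
theorem stmt_19 (n : ℕ) (hn : n.Prime) (hodd : Odd n) (hn5 : 5 ≤ n)
    (i j : ZMod n) (hi : i ≠ 0) (hj : j ≠ 0) (hij : i ≠ j) (ℓ : ZMod n)
    (hℓ : ℓ ∉ ({0, 3 * i, 3 * j, i, j, 2 * i, 2 * j, 2 * i + j, 2 * j + i} : Set (ZMod n))) :
    ({s(0, ℓ), s(i, ℓ - 2 * i), s(j, ℓ - 2 * j), s((0 : ZMod n), (2 : ZMod n)⁻¹ * ℓ),
        s(i, (2 : ZMod n)⁻¹ * (ℓ - i)), s(j, (2 : ZMod n)⁻¹ * (ℓ - j))} :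
      Finset (Sym2 (ZMod n))).card = 6 := by
  haveI : Fact n.Prime := ⟨hn⟩
  have h2 : (2 : ZMod n) ≠ 0 := by
    have : ((2 : ℕ) : ZMod n) ≠ 0 := by
      rw [Ne, ZMod.natCast_eq_zero_iff]
      intro h
      have := Nat.le_of_dvd (by norm_num) h
      omega
    simpa using this
  simp only [Set.mem_insert_iff, Set.mem_singleton_iff, not_or] at hℓ
  obtain ⟨h0, h3i, h3j, hil, hjl, h2i, h2j, h2ij, h2ji⟩ := hℓ
  have e12 : s((0:ZMod n), ℓ) ≠ s(i, ℓ - 2 * i) := by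
    rw [Ne, Sym2.eq_iff]
    rintro (⟨h, h'⟩ | ⟨h, h'⟩)
    · exact hi h.symm
    · exact h2i (by linear_combination -h)
  have e13 : s((0:ZMod n), ℓ) ≠ s(j, ℓ - 2 * j) := by
    rw [Ne, Sym2.eq_iff]
    rintro (⟨h, h'⟩ | ⟨h, h'⟩)
    · exact hj h.symm
    · exact h2j (by linear_combination -h)
  have hc : (2:ZMod n) * (2:ZMod n)⁻¹ = 1 := mul_inv_cancel₀ h2
  have e14 : s((0:ZMod n), ℓ) ≠ s((0:ZMod n), (2:ZMod n)⁻¹ * ℓ) := by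
    rw [Ne, Sym2.eq_iff]
    rintro (⟨h, h'⟩ | ⟨h, h'⟩)
    · exact h0 (by linear_combination 2 * h' + ℓ * hc)
    · exact h0 h'
  have e15 : s((0:ZMod n), ℓ) ≠ s(i, (2:ZMod n)⁻¹ * (ℓ - i)) := by
    rw [Ne, Sym2.eq_iff]
    rintro (⟨h, h'⟩ | ⟨h, h'⟩)
    · exact hi h.symm
    · exact hil h'
  have e16 : s((0:ZMod n), ℓ) ≠ s(j, (2:ZMod n)⁻¹ * (ℓ - j)) := by
    rw [Ne, Sym2.eq_iff]
    rintro (⟨h, h'⟩ | ⟨h, h'⟩)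
    · exact hj h.symm
    · exact hjl h'
  have e23 : s(i, ℓ - 2 * i) ≠ s(j, ℓ - 2 * j) := by
    rw [Ne, Sym2.eq_iff]
    rintro (⟨h, h'⟩ | ⟨h, h'⟩)
    · exact hij h
    · exact h2ji (by linear_combination -h)
  have e24 : s(i, ℓ - 2 * i) ≠ s((0:ZMod n), (2:ZMod n)⁻¹ * ℓ) := by
    rw [Ne, Sym2.eq_iff]
    rintro (⟨h, h'⟩ | ⟨h, h'⟩)
    · exact hi h
    · exact h2i (by linear_combination h')
  have e25 : s(i, ℓ - 2 * i) ≠ s(i, (2:ZMod n)⁻¹ * (ℓ - i)) := by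
    rw [Ne, Sym2.eq_iff]
    rintro (⟨h, h'⟩ | ⟨h, h'⟩)
    · field_simp at h'
      exact h3i (by linear_combination h')
    · exact h3i (by linear_combination h')
  have e26 : s(i, ℓ - 2 * i) ≠ s(j, (2:ZMod n)⁻¹ * (ℓ - j)) := by
    rw [Ne, Sym2.eq_iff]
    rintro (⟨h, h'⟩ | ⟨h, h'⟩)
    · exact hij h
    · exact h2ij (by linear_combination h')
  have e34 : s(j, ℓ - 2 * j) ≠ s((0:ZMod n), (2:ZMod n)⁻¹ * ℓ) := by
    rw [Ne, Sym2.eq_iff]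
    rintro (⟨h, h'⟩ | ⟨h, h'⟩)
    · exact hj h
    · exact h2j (by linear_combination h')
  have e35 : s(j, ℓ - 2 * j) ≠ s(i, (2:ZMod n)⁻¹ * (ℓ - i)) := by
    rw [Ne, Sym2.eq_iff]
    rintro (⟨h, h'⟩ | ⟨h, h'⟩)
    · exact hij h.symm
    · exact h2ji (by linear_combination h')
  have e36 : s(j, ℓ - 2 * j) ≠ s(j, (2:ZMod n)⁻¹ * (ℓ - j)) := by
    rw [Ne, Sym2.eq_iff]
    rintro (⟨h, h'⟩ | ⟨h, h'⟩)
    · field_simp at h'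
      exact h3j (by linear_combination h')
    · exact h3j (by linear_combination h')
  have e45 : s((0:ZMod n), (2:ZMod n)⁻¹ * ℓ) ≠ s(i, (2:ZMod n)⁻¹ * (ℓ - i)) := by
    rw [Ne, Sym2.eq_iff]
    rintro (⟨h, h'⟩ | ⟨h, h'⟩)
    · exact hi h.symm
    · field_simp at h
      exact hil (by linear_combination -h)
  have e46 : s((0:ZMod n), (2:ZMod n)⁻¹ * ℓ) ≠ s(j, (2:ZMod n)⁻¹ * (ℓ - j)) := by
    rw [Ne, Sym2.eq_iff]
    rintro (⟨h, h'⟩ | ⟨h, h'⟩)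
    · exact hj h.symm
    · field_simp at h
      exact hjl (by linear_combination -h)
  have e56 : s(i, (2:ZMod n)⁻¹ * (ℓ - i)) ≠ s(j, (2:ZMod n)⁻¹ * (ℓ - j)) := by
    rw [Ne, Sym2.eq_iff]
    rintro (⟨h, h'⟩ | ⟨h, h'⟩)
    · exact hij h
    · field_simp at h
      exact h2ij (by linear_combination -h)
  rw [Finset.card_insert_of_notMem (by simp [e12, e13, e14, e15, e16]),
    Finset.card_insert_of_notMem (by simp [e23, e24, e25, e26]),
    Finset.card_insert_of_notMem (by simp [e34, e35, e36]),
    Finset.card_insert_of_notMem (by simp [e45, e46]),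
    Finset.card_insert_of_notMem (by simp [e56]),
    Finset.card_singleton]
end
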